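/- arXiv:2504.18868 — 6 statements merged into one kernel-verified Lean document; each statement's English description precedes it below -/
import Mathlib

section
/- If δ is a joint strategy (a probability distribution over pure strategy profiles) and δ' = (ρ'_i, δ_{-i}) is the product joint strategy where player i plays a fixed pure strategy ρ'_i while the other players play according to the marginal δ_{-i} of δ, then the total correlation of δ' is at most the total correlation of δ, i.e. I(δ') ≤ I(δ). -/
open Finset

/-- Marginal distribution of a joint strategy `δ` for player `i`. -/
noncomputable def marg {N : Type} [Fintype N] [DecidableEq N]
    {P : N → Type} [∀ i, Fintype (P i)] [∀ i, DecidableEq (P i)]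
    (δ : (∀ j, P j) → ℝ) (i : N) (a : P i) : ℝ :=
  ∑ ρ : ∀ j, P j, if ρ i = a then δ ρ else 0

/-- Product of the marginals of a joint strategy `δ`. -/
noncomputable def prodMarg {N : Type} [Fintype N] [DecidableEq N]
    {P : N → Type} [∀ i, Fintype (P i)] [∀ i, DecidableEq (P i)]
    (δ : (∀ j, P j) → ℝ) (ρ : ∀ j, P j) : ℝ :=
  ∏ i, marg δ i (ρ i)

/-- Kullback–Leibler divergence between finitely supported distributions. -/
noncomputable def KL {X : Type} [Fintype X] (p q : X → ℝ) : ℝ :=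
  ∑ x, p x * Real.log (p x / q x)

/-!
In `δ' = (ρ', δ_{-i})` player `i` is deterministic and every other player keeps its marginal, so
`I(δ') = D(δ_{-i} ‖ ∏_{j ≠ i} μ_j(δ))`. Splitting `log (δ / ∏_j μ_j)` as
`log (δ / (μ_i ⊗ δ_{-i})) + log (δ_{-i} / ∏_{j ≠ i} μ_j)` gives the chain rule
`I(δ) = D(δ ‖ μ_i(δ) ⊗ δ_{-i}) + I(δ')`, and the first term is nonnegative by Gibbs' inequality.
-/

open Function Real

theorem sub_le_mul_log_div {p q : ℝ} (hp : 0 ≤ p) (hq : 0 ≤ q) (hpq : 0 < p → 0 < q) :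
    p - q ≤ p * log (p / q) := by
  rcases hp.eq_or_lt with rfl | hp
  · simpa using hq
  have h := one_sub_inv_le_log_of_pos (div_pos hp (hpq hp))
  rw [inv_div] at h
  calc p - q = p * (1 - q / p) := by field_simp
    _ ≤ p * log (p / q) := mul_le_mul_of_nonneg_left h hp.le

theorem KL_nonneg {X : Type} [Fintype X] {p q : X → ℝ} (hp : ∀ x, 0 ≤ p x) (hq : ∀ x, 0 ≤ q x)
    (hpq : ∀ x, 0 < p x → 0 < q x) (hsum : ∑ x, q x ≤ ∑ x, p x) : 0 ≤ KL p q :=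
  calc 0 ≤ ∑ x, (p x - q x) := by rw [sum_sub_distrib]; linarith
    _ ≤ KL p q := sum_le_sum fun x _ => sub_le_mul_log_div (hp x) (hq x) (hpq x)

section Profiles

variable {N : Type} [DecidableEq N] {P : N → Type} [∀ j, Fintype (P j)]

/-- The marginal `δ_{-i}` of `δ`, read as a function of full profiles that ignores `ρ i`. -/
noncomputable def margExcept (i : N) (δ : (∀ j, P j) → ℝ) (ρ : ∀ j, P j) : ℝ :=
  ∑ a, δ (update ρ i a)

theorem margExcept_update (i : N) (δ : (∀ j, P j) → ℝ) (ρ : ∀ j, P j) (a : P i) :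
    margExcept i δ (update ρ i a) = margExcept i δ ρ := by
  simp only [margExcept, update_idem]

theorem le_margExcept {δ : (∀ j, P j) → ℝ} (hpos : ∀ ρ, 0 ≤ δ ρ) (i : N) (ρ : ∀ j, P j) :
    δ ρ ≤ margExcept i δ ρ := by
  unfold margExcept
  simpa using single_le_sum (f := fun a => δ (update ρ i a)) (fun a _ => hpos _) (mem_univ (ρ i))

variable [Fintype N]

theorem sum_sum_update {M : Type} [AddCommMonoid M] (i : N) (F : P i → (∀ j, P j) → M) :
    ∑ ρ, ∑ a, F (ρ i) (update ρ i a) = ∑ ρ, ∑ a, F a ρ := by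
  let e : Equiv.Perm ((∀ j, P j) × P i) :=
    Involutive.toPerm (fun x => (update x.1 i x.2, x.1 i)) fun x => by simp
  simp only [← Fintype.sum_prod_type']
  exact Equiv.sum_comp e (fun x : (∀ j, P j) × P i => F x.2 x.1)

variable [∀ j, DecidableEq (P j)]

theorem sum_ite_sum_update {M : Type} [AddCommMonoid M] (i : N) (ρ' : P i) (g : (∀ j, P j) → M) :
    ∑ ρ, (if ρ i = ρ' then ∑ a, g (update ρ i a) else 0) = ∑ ρ, g ρ := by
  have h := sum_sum_update i fun b σ => if b = ρ' then g σ else 0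
  simp only [sum_ite_eq', mem_univ, if_true] at h
  rw [← h]
  exact sum_congr rfl fun ρ _ => by split_ifs <;> simp

theorem sum_marg (δ : (∀ j, P j) → ℝ) (i : N) : ∑ a, marg δ i a = ∑ ρ, δ ρ := by
  simp only [marg]
  rw [sum_comm]
  simp

theorem le_marg {δ : (∀ j, P j) → ℝ} (hpos : ∀ ρ, 0 ≤ δ ρ) (ρ : ∀ j, P j) (j : N) :
    δ ρ ≤ marg δ j (ρ j) := by
  unfold marg
  simpa using single_le_sum (f := fun σ => if σ j = ρ j then δ σ else 0)
    (fun σ _ => by split_ifs; exacts [hpos σ, le_rfl]) (mem_univ ρ)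

theorem sum_marg_mul_margExcept (i : N) (δ : (∀ j, P j) → ℝ) :
    ∑ ρ, marg δ i (ρ i) * margExcept i δ ρ = (∑ ρ, δ ρ) ^ 2 := by
  simp only [margExcept, mul_sum, sum_sum_update i fun b σ => marg δ i b * δ σ, ← sum_mul,
    sum_marg, sq]

noncomputable def prodMargExcept (i : N) (δ : (∀ j, P j) → ℝ) (ρ : ∀ j, P j) : ℝ :=
  ∏ j ∈ univ.erase i, marg δ j (ρ j)

theorem prodMargExcept_update (i : N) (δ : (∀ j, P j) → ℝ) (ρ : ∀ j, P j) (a : P i) :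
    prodMargExcept i δ (update ρ i a) = prodMargExcept i δ ρ :=
  prod_congr rfl fun j hj => by rw [update_of_ne (ne_of_mem_erase hj)]

theorem prodMarg_eq_marg_mul_prodMargExcept (i : N) (δ : (∀ j, P j) → ℝ) (ρ : ∀ j, P j) :
    prodMarg δ ρ = marg δ i (ρ i) * prodMargExcept i δ ρ :=
  (mul_prod_erase univ _ (mem_univ i)).symm

/-- The joint strategy `(ρ', δ_{-i})`. -/
noncomputable def deviation (i : N) (ρ' : P i) (δ : (∀ j, P j) → ℝ) (ρ : ∀ j, P j) : ℝ :=
  if ρ i = ρ' then margExcept i δ ρ else 0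

theorem sum_deviation (i : N) (ρ' : P i) (δ : (∀ j, P j) → ℝ) :
    ∑ ρ, deviation i ρ' δ ρ = ∑ ρ, δ ρ :=
  sum_ite_sum_update i ρ' δ

theorem marg_deviation_self (i : N) (ρ' : P i) (δ : (∀ j, P j) → ℝ) (b : P i) :
    marg (deviation i ρ' δ) i b = if b = ρ' then ∑ ρ, δ ρ else 0 := by
  split_ifs with hb
  · subst hb
    rw [← sum_deviation i b]
    exact sum_congr rfl fun ρ _ => by unfold deviation; split_ifs <;> rfl
  · exact sum_eq_zero fun ρ _ => by unfold deviation; split_ifs with h h' <;> simp_all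

theorem marg_deviation_of_ne {i j : N} (hj : j ≠ i) (ρ' : P i) (δ : (∀ j, P j) → ℝ) (b : P j) :
    marg (deviation i ρ' δ) j b = marg δ j b := by
  rw [marg, marg, ← sum_ite_sum_update i ρ' fun σ => if σ j = b then δ σ else 0]
  refine sum_congr rfl fun ρ _ => ?_
  simp only [deviation, margExcept, update_of_ne hj]
  split_ifs <;> simp

theorem prodMarg_deviation {δ : (∀ j, P j) → ℝ} (hsum : ∑ ρ, δ ρ = 1) (i : N) (ρ' : P i)
    (ρ : ∀ j, P j) :
    prodMarg (deviation i ρ' δ) ρ = if ρ i = ρ' then prodMargExcept i δ ρ else 0 := by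
  rw [prodMarg_eq_marg_mul_prodMargExcept i, marg_deviation_self, hsum]
  have : prodMargExcept i (deviation i ρ' δ) ρ = prodMargExcept i δ ρ :=
    prod_congr rfl fun j hj => marg_deviation_of_ne (ne_of_mem_erase hj) ρ' δ _
  rw [this]
  split_ifs <;> simp

theorem KL_deviation {δ : (∀ j, P j) → ℝ} (hsum : ∑ ρ, δ ρ = 1) (i : N) (ρ' : P i) :
    KL (deviation i ρ' δ) (prodMarg (deviation i ρ' δ)) =
      ∑ ρ, δ ρ * log (margExcept i δ ρ / prodMargExcept i δ ρ) := by
  rw [KL, ← sum_ite_sum_update i ρ' fun ρ => δ ρ * log (margExcept i δ ρ / prodMargExcept i δ ρ)]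
  refine sum_congr rfl fun ρ _ => ?_
  simp only [prodMarg_deviation hsum, deviation, margExcept_update, prodMargExcept_update,
    ← sum_mul]
  split_ifs <;> simp [margExcept]

theorem KL_sub_KL_deviation {δ : (∀ j, P j) → ℝ} (hpos : ∀ ρ, 0 ≤ δ ρ) (hsum : ∑ ρ, δ ρ = 1)
    (i : N) (ρ' : P i) :
    KL δ (prodMarg δ) - KL (deviation i ρ' δ) (prodMarg (deviation i ρ' δ)) =
      KL δ fun ρ => marg δ i (ρ i) * margExcept i δ ρ := by
  rw [KL_deviation hsum, KL, KL, ← sum_sub_distrib]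
  refine sum_congr rfl fun ρ _ => ?_
  rcases (hpos ρ).eq_or_lt with h0 | h0
  · simp [← h0]
  have hm : ∀ j, marg δ j (ρ j) ≠ 0 := fun j => (h0.trans_le (le_marg hpos ρ j)).ne'
  have hs : margExcept i δ ρ ≠ 0 := (h0.trans_le (le_margExcept hpos i ρ)).ne'
  have hg : prodMargExcept i δ ρ ≠ 0 := prod_ne_zero_iff.mpr fun j _ => hm j
  have hq : prodMarg δ ρ ≠ 0 := by
    rw [prodMarg_eq_marg_mul_prodMargExcept i]
    exact mul_ne_zero (hm i) hg
  rw [← mul_sub, ← log_div (div_ne_zero h0.ne' hq) (div_ne_zero hs hg),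
    prodMarg_eq_marg_mul_prodMargExcept i]
  congr 2
  field_simp

end Profiles

/-- If `δ'` is the product joint strategy in which player `i` plays the fixed pure
strategy `ρ'` and the others play according to the marginal `δ_{-i}` of `δ`, then the
total correlation of `δ'` is at most the total correlation of `δ`. -/
theorem product_deviation_total_correlation_le
    {N : Type} [Fintype N] [DecidableEq N]
    {P : N → Type} [∀ i, Fintype (P i)] [∀ i, DecidableEq (P i)]
    (δ : (∀ j, P j) → ℝ) (hpos : ∀ ρ, 0 ≤ δ ρ) (hsum : ∑ ρ, δ ρ = 1)
    (i : N) (ρ' : P i)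
    (δ' : (∀ j, P j) → ℝ)
    (hδ' : ∀ ρ, δ' ρ =
      if ρ i = ρ' then ∑ a : P i, δ (Function.update ρ i a) else 0) :
    KL δ' (prodMarg δ') ≤ KL δ (prodMarg δ) := by
  obtain rfl : δ' = deviation i ρ' δ := funext hδ'
  have hmarg ρ : δ ρ ≤ marg δ i (ρ i) := le_marg hpos ρ i
  have hexcept ρ : δ ρ ≤ margExcept i δ ρ := le_margExcept hpos i ρ
  have hgibbs : 0 ≤ KL δ fun ρ => marg δ i (ρ i) * margExcept i δ ρ :=
    KL_nonneg hpos (fun ρ => mul_nonneg ((hpos ρ).trans (hmarg ρ)) ((hpos ρ).trans (hexcept ρ)))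
      (fun ρ h => mul_pos (h.trans_le (hmarg ρ)) (h.trans_le (hexcept ρ)))
      (by rw [sum_marg_mul_margExcept, hsum, one_pow])
  linarith [KL_sub_KL_deviation hpos hsum i ρ']
end

section
/- In the biased Shapley game with bias η, the joint strategy δ* that places probability 1/6 on each of the six outcomes (1,1),(1,2),(2,2),(2,3),(3,1),(3,3) is a coarse correlated equilibrium if and only if η ≤ 1/2. -/
/-!
Both marginals of `δ*` are uniform, so deviating to a pure action earns a player one third of the
corresponding row sum of `A` (column sum of `B`): at most `(1 + η) / 3`, attained by row 1
(column 3). Playing `δ*` itself pays each player `1 / 2`.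
-/

open Finset

/-- Player 1's payoff matrix in the biased Shapley game. -/
noncomputable def shapleyA (η : ℝ) : Matrix (Fin 3) (Fin 3) ℝ :=
  !![1, 0, η; 0, 1, 0; 0, 0, 1]

/-- Player 2's payoff matrix in the biased Shapley game. -/
noncomputable def shapleyB (η : ℝ) : Matrix (Fin 3) (Fin 3) ℝ :=
  !![0, 1, η; 0, 0, 1; 1, 0, 0]

/-- The joint strategy placing mass 1/6 on the six outcomes
(1,1),(1,2),(2,2),(2,3),(3,1),(3,3) (written 0-indexed). -/
noncomputable def deltaStar : Fin 3 × Fin 3 → ℝ := fun p =>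
  if p ∈ ({(0, 0), (0, 1), (1, 1), (1, 2), (2, 0), (2, 2)} :
      Finset (Fin 3 × Fin 3)) then 1 / 6 else 0

theorem sum_deltaStar_mul (f : Fin 3 × Fin 3 → ℝ) :
    ∑ p, deltaStar p * f p =
      (f (0, 0) + f (0, 1) + f (1, 1) + f (1, 2) + f (2, 0) + f (2, 2)) / 6 := by
  simp [deltaStar, Fintype.sum_prod_type, Fin.sum_univ_three, div_eq_inv_mul, mul_add, add_assoc]

theorem sum_deltaStar_mul_fst (g : Fin 3 → ℝ) :
    ∑ p, deltaStar p * g p.1 = (∑ i, g i) / 3 := by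
  rw [sum_deltaStar_mul, Fin.sum_univ_three]
  ring

theorem sum_deltaStar_mul_snd (g : Fin 3 → ℝ) :
    ∑ p, deltaStar p * g p.2 = (∑ j, g j) / 3 := by
  rw [sum_deltaStar_mul, Fin.sum_univ_three]
  ring

theorem sum_deltaStar_mul_shapleyA (η : ℝ) :
    ∑ p, deltaStar p * shapleyA η p.1 p.2 = 1 / 2 := by
  simp [sum_deltaStar_mul, shapleyA]
  norm_num

theorem sum_deltaStar_mul_shapleyB (η : ℝ) :
    ∑ p, deltaStar p * shapleyB η p.1 p.2 = 1 / 2 := by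
  simp [sum_deltaStar_mul, shapleyB]
  norm_num

theorem sum_deltaStar_mul_shapleyA_row (η : ℝ) (r : Fin 3) :
    ∑ p, deltaStar p * shapleyA η r p.2 = ![1 + η, 1, 1] r / 3 := by
  rw [sum_deltaStar_mul_snd]
  fin_cases r <;> simp [shapleyA, Fin.sum_univ_three]

theorem sum_deltaStar_mul_shapleyB_col (η : ℝ) (c : Fin 3) :
    ∑ p, deltaStar p * shapleyB η p.1 c = ![1, 1, 1 + η] c / 3 := by
  rw [sum_deltaStar_mul_fst (shapleyB η · c)]
  fin_cases c <;> simp [shapleyB, Fin.sum_univ_three, add_comm]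

/-- In the biased Shapley game with bias `η`, the joint strategy `δ*` is a coarse
correlated equilibrium if and only if `η ≤ 1/2`. -/
theorem deltaStar_cce_iff (η : ℝ) :
    ((∀ r : Fin 3,
        ∑ p : Fin 3 × Fin 3, deltaStar p * shapleyA η r p.2 ≤
          ∑ p : Fin 3 × Fin 3, deltaStar p * shapleyA η p.1 p.2) ∧
      (∀ c : Fin 3,
        ∑ p : Fin 3 × Fin 3, deltaStar p * shapleyB η p.1 c ≤
          ∑ p : Fin 3 × Fin 3, deltaStar p * shapleyB η p.1 p.2)) ↔
    η ≤ 1 / 2 := by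
  simp [sum_deltaStar_mul_shapleyA_row, sum_deltaStar_mul_shapleyB_col,
    sum_deltaStar_mul_shapleyA, sum_deltaStar_mul_shapleyB, Fin.forall_fin_succ]
  norm_num
  constructor <;> intro <;> linarith
end

section
/- In the biased Shapley game with bias η ∈ (−1, 1), the strategy profile σ_1 = (1/(3−η), (1−η)/(3−η), 1/(3−η)) for player 1 and σ_2 = ((1−η)/(3−η), 1/(3−η), 1/(3−η)) for player 2 is a Nash equilibrium: each pure action of each player yields the same expected payoff against the opponent's strategy. -/
open Finset

/-- Expected payoff when player 1 plays mixed strategy `σ₁` and player 2 plays `σ₂`,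
with payoff matrix `U`. -/
noncomputable def payoff (U : Matrix (Fin 3) (Fin 3) ℝ) (σ₁ σ₂ : Fin 3 → ℝ) : ℝ :=
  ∑ r : Fin 3, ∑ c : Fin 3, σ₁ r * σ₂ c * U r c

/-- For `η ∈ (−1,1)`, the profile
`σ₁ = (1/(3−η), (1−η)/(3−η), 1/(3−η))`, `σ₂ = ((1−η)/(3−η), 1/(3−η), 1/(3−η))`
is a Nash equilibrium of the biased Shapley game: every pure action of each player
yields the same expected payoff against the opponent's strategy, and no unilateral
deviation to a pure strategy increases either player's payoff. -/
theorem biased_shapley_nash (η : ℝ) (hη₁ : -1 < η) (hη₂ : η < 1) :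
    let σ₁ : Fin 3 → ℝ := ![1 / (3 - η), (1 - η) / (3 - η), 1 / (3 - η)]
    let σ₂ : Fin 3 → ℝ := ![(1 - η) / (3 - η), 1 / (3 - η), 1 / (3 - η)]
    (∀ r r' : Fin 3,
      ∑ c : Fin 3, σ₂ c * shapleyA η r c = ∑ c : Fin 3, σ₂ c * shapleyA η r' c) ∧
    (∀ c c' : Fin 3,
      ∑ r : Fin 3, σ₁ r * shapleyB η r c = ∑ r : Fin 3, σ₁ r * shapleyB η r c') ∧
    (∀ r : Fin 3,
      ∑ c : Fin 3, σ₂ c * shapleyA η r c ≤ payoff (shapleyA η) σ₁ σ₂) ∧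
    (∀ c : Fin 3,
      ∑ r : Fin 3, σ₁ r * shapleyB η r c ≤ payoff (shapleyB η) σ₁ σ₂) := by
  intro σ₁ σ₂
  have h3 : (3 : ℝ) - η ≠ 0 := by linarith
  refine ⟨?_, ?_, ?_, ?_⟩
  · intro r r'
    fin_cases r <;> fin_cases r' <;>
      · simp [shapleyA, σ₂, Fin.sum_univ_three, Matrix.vecHead, Matrix.vecTail]
        try field_simp
        try ring
  · intro c c'
    fin_cases c <;> fin_cases c' <;>
      · simp [shapleyB, σ₁, Fin.sum_univ_three, Matrix.vecHead, Matrix.vecTail]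
        try field_simp
        try ring
  · intro r
    fin_cases r <;>
      · simp [shapleyA, payoff, σ₁, σ₂, Fin.sum_univ_three, Matrix.vecHead, Matrix.vecTail]
        apply le_of_eq
        field_simp
        ring
  · intro c
    fin_cases c <;>
      · simp [shapleyB, payoff, σ₁, σ₂, Fin.sum_univ_three, Matrix.vecHead, Matrix.vecTail]
        apply le_of_eq
        field_simp
        ring
end

section
/- In the (unbiased) Shapley game, the joint strategy δ* placing mass 1/6 on each of the outcomes (1,1),(1,2),(2,2),(2,3),(3,1),(3,3) is a coarse correlated equilibrium, but it is not a product distribution (i.e., δ* ≠ μ_1(δ*) ⊗ μ_2(δ*)), and hence is a strictly correlated CCE. -/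
open Finset

/-- Player 1's payoff matrix in the (unbiased) Shapley game: the identity. -/
noncomputable def shapA : Matrix (Fin 3) (Fin 3) ℝ :=
  !![1, 0, 0; 0, 1, 0; 0, 0, 1]

/-- Player 2's payoff matrix in the (unbiased) Shapley game: the cyclic shift. -/
noncomputable def shapB : Matrix (Fin 3) (Fin 3) ℝ :=
  !![0, 1, 0; 0, 0, 1; 1, 0, 0]

/-- Marginal of a two-player joint strategy for player 1. -/
noncomputable def marg₁ (δ : Fin 3 × Fin 3 → ℝ) (r : Fin 3) : ℝ := ∑ c, δ (r, c)

/-- Marginal of a two-player joint strategy for player 2. -/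
noncomputable def marg₂ (δ : Fin 3 × Fin 3 → ℝ) (c : Fin 3) : ℝ := ∑ r, δ (r, c)

/-- In the Shapley game, `δ*` is a coarse correlated equilibrium, but it is not a
product distribution: it differs from the product of its marginals, hence it is a
strictly correlated CCE. -/
theorem deltaStar_strictly_correlated_cce :
    (∀ r : Fin 3,
      ∑ p : Fin 3 × Fin 3, deltaStar p * shapA r p.2 ≤
        ∑ p : Fin 3 × Fin 3, deltaStar p * shapA p.1 p.2) ∧
    (∀ c : Fin 3,
      ∑ p : Fin 3 × Fin 3, deltaStar p * shapB p.1 c ≤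
        ∑ p : Fin 3 × Fin 3, deltaStar p * shapB p.1 p.2) ∧
    deltaStar ≠ fun p => marg₁ deltaStar p.1 * marg₂ deltaStar p.2 := by
  refine ⟨?_, ?_, ?_⟩
  · intro r
    fin_cases r <;>
      simp [Fintype.sum_prod_type, Fin.sum_univ_succ, deltaStar, shapA]
  · intro c
    fin_cases c <;>
      simp [Fintype.sum_prod_type, Fin.sum_univ_succ, deltaStar, shapB]
  · intro hEq
    have := congrFun hEq ((0 : Fin 3), (2 : Fin 3))
    simp [deltaStar, marg₁, marg₂, Fin.sum_univ_succ] at this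
end

section
/- The Shapley game has no pure-strategy Nash equilibrium, nor any Nash equilibrium in which either player's strategy has support of size one or two; hence every Nash equilibrium of the (non-degenerate) Shapley game has full support for both players. -/
open Finset

/-- From `x * (Y - z) = 0`, `z = 0`, `0 < Y` we get `x = 0`. -/
lemma shapley_step (x Y z : ℝ) (h : x * (Y - z) = 0) (hz : z = 0)
    (hY : (1:ℝ)/3 ≤ Y) : x = 0 := by
  rcases mul_eq_zero.mp h with h' | h'
  · exact h'
  · linarith

/-- Cascade lemma: under the complementary-slackness conditions of the Shapley
game, the first components of both strategies are positive. -/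
lemma shapley_aux (a0 a1 a2 b0 b1 b2 V W : ℝ)
    (ha0 : 0 ≤ a0) (hb0 : 0 ≤ b0)
    (hsa : a0 + a1 + a2 = 1) (hsb : b0 + b1 + b2 = 1)
    (hV : (1:ℝ)/3 ≤ V) (hW : (1:ℝ)/3 ≤ W)
    (e0 : a0 * (V - b0) = 0) (e1 : a1 * (V - b1) = 0) (e2 : a2 * (V - b2) = 0)
    (f0 : b1 * (W - a0) = 0) (f1 : b2 * (W - a1) = 0) (f2 : b0 * (W - a2) = 0) :
    0 < a0 ∧ 0 < b0 := by
  constructor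
  · by_contra h
    have ha0' : a0 = 0 := le_antisymm (not_lt.mp h) ha0
    have hb1' : b1 = 0 := shapley_step _ _ _ f0 ha0' hW
    have ha1' : a1 = 0 := shapley_step _ _ _ e1 hb1' hV
    have hb2' : b2 = 0 := shapley_step _ _ _ f1 ha1' hW
    have ha2' : a2 = 0 := shapley_step _ _ _ e2 hb2' hV
    linarith
  · by_contra h
    have hb0' : b0 = 0 := le_antisymm (not_lt.mp h) hb0
    have ha0' : a0 = 0 := shapley_step _ _ _ e0 hb0' hV
    have hb1' : b1 = 0 := shapley_step _ _ _ f0 ha0' hW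
    have ha1' : a1 = 0 := shapley_step _ _ _ e1 hb1' hV
    have hb2' : b2 = 0 := shapley_step _ _ _ f1 ha1' hW
    linarith

/-- Every Nash equilibrium of the Shapley game has full support for both players;
in particular there is no pure-strategy equilibrium, nor one in which either player's
strategy has support of size one or two. -/
theorem shapley_nash_full_support
    (σ₁ σ₂ : Fin 3 → ℝ)
    (h₁pos : ∀ a, 0 ≤ σ₁ a) (h₂pos : ∀ a, 0 ≤ σ₂ a)
    (h₁sum : ∑ a, σ₁ a = 1) (h₂sum : ∑ a, σ₂ a = 1)
    (hne₁ : ∀ r : Fin 3,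
      ∑ c : Fin 3, σ₂ c * shapA r c ≤ payoff shapA σ₁ σ₂)
    (hne₂ : ∀ c : Fin 3,
      ∑ r : Fin 3, σ₁ r * shapB r c ≤ payoff shapB σ₁ σ₂) :
    (∀ a, 0 < σ₁ a) ∧ (∀ a, 0 < σ₂ a) := by
  have E0 := hne₁ 0
  have E1 := hne₁ 1
  have E2 := hne₁ 2
  have F0 := hne₂ 0
  have F1 := hne₂ 1
  have F2 := hne₂ 2
  simp [payoff, shapA, shapB, Fin.sum_univ_three, Matrix.vecHead, Matrix.vecTail]
    at E0 E1 E2 F0 F1 F2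
  rw [Fin.sum_univ_three] at h₁sum h₂sum
  set a0 := σ₁ 0 with ha0def
  set a1 := σ₁ 1 with ha1def
  set a2 := σ₁ 2 with ha2def
  set b0 := σ₂ 0 with hb0def
  set b1 := σ₂ 1 with hb1def
  set b2 := σ₂ 2 with hb2def
  set V := a0 * b0 + a1 * b1 + a2 * b2 with hVdef
  set W := a0 * b1 + a1 * b2 + a2 * b0 with hWdef
  have hV : (1:ℝ)/3 ≤ V := by linarith
  have hW : (1:ℝ)/3 ≤ W := by linarith
  -- complementary slackness
  have t0 : 0 ≤ a0 * (V - b0) := mul_nonneg (h₁pos 0) (by linarith)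
  have t1 : 0 ≤ a1 * (V - b1) := mul_nonneg (h₁pos 1) (by linarith)
  have t2 : 0 ≤ a2 * (V - b2) := mul_nonneg (h₁pos 2) (by linarith)
  have tsum : a0 * (V - b0) + a1 * (V - b1) + a2 * (V - b2) = 0 := by
    have : a0 * (V - b0) + a1 * (V - b1) + a2 * (V - b2)
        = V * (a0 + a1 + a2) - V := by ring
    rw [this, h₁sum]; ring
  have e0 : a0 * (V - b0) = 0 := by linarith
  have e1 : a1 * (V - b1) = 0 := by linarith
  have e2 : a2 * (V - b2) = 0 := by linarith
  have s0 : 0 ≤ b1 * (W - a0) := mul_nonneg (h₂pos 1) (by linarith)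
  have s1 : 0 ≤ b2 * (W - a1) := mul_nonneg (h₂pos 2) (by linarith)
  have s2 : 0 ≤ b0 * (W - a2) := mul_nonneg (h₂pos 0) (by linarith)
  have ssum : b1 * (W - a0) + b2 * (W - a1) + b0 * (W - a2) = 0 := by
    have : b1 * (W - a0) + b2 * (W - a1) + b0 * (W - a2)
        = W * (b0 + b1 + b2) - W := by ring
    rw [this, h₂sum]; ring
  have f0 : b1 * (W - a0) = 0 := by linarith
  have f1 : b2 * (W - a1) = 0 := by linarith
  have f2 : b0 * (W - a2) = 0 := by linarith
  have h0 := shapley_aux a0 a1 a2 b0 b1 b2 V W (h₁pos 0) (h₂pos 0)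
    h₁sum h₂sum hV hW e0 e1 e2 f0 f1 f2
  have h1 := shapley_aux a1 a2 a0 b1 b2 b0 V W (h₁pos 1) (h₂pos 1)
    (by linarith) (by linarith) (by rw [hVdef]; ring_nf; linarith)
    (by rw [hWdef]; ring_nf; linarith) e1 e2 e0 f1 f2 f0
  have h2 := shapley_aux a2 a0 a1 b2 b0 b1 V W (h₁pos 2) (h₂pos 2)
    (by linarith) (by linarith) (by rw [hVdef]; ring_nf; linarith)
    (by rw [hWdef]; ring_nf; linarith) e2 e0 e1 f2 f0 f1
  constructor
  · intro a
    fin_cases a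
    · exact h0.1
    · exact h1.1
    · exact h2.1
  · intro a
    fin_cases a
    · exact h0.2
    · exact h1.2
    · exact h2.2
end

section
/- In the biased Shapley game with η ≤ 1/2, the product of the marginals of the correlated equilibrium δ* (mass 1/6 on (1,1),(1,2),(2,2),(2,3),(3,1),(3,3)) is the uniform product distribution, and for η ≠ 0 this uniform profile is NOT a Nash equilibrium: player 1 strictly gains by deviating to the first row when η > 0. -/
open Finset

/-- In the biased Shapley game with `η ≤ 1/2`, the product of the marginals of the
correlated equilibrium `δ*` is the uniform product distribution; for `η ≠ 0` the
uniform profile is not a Nash equilibrium, and for `η > 0` player 1 strictly gains by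
deviating to the first row. -/
theorem biased_shapley_uniform_marginals_not_nash (η : ℝ) (hη : η ≤ 1 / 2) :
    (∀ p : Fin 3 × Fin 3,
      (∑ c, deltaStar (p.1, c)) * (∑ r, deltaStar (r, p.2)) = 1 / 9) ∧
    (η ≠ 0 →
      ¬((∀ r : Fin 3,
          ∑ c : Fin 3, (1 / 3 : ℝ) * shapleyA η r c ≤
            payoff (shapleyA η) (fun _ => 1 / 3) (fun _ => 1 / 3)) ∧
        (∀ c : Fin 3,
          ∑ r : Fin 3, (1 / 3 : ℝ) * shapleyB η r c ≤
            payoff (shapleyB η) (fun _ => 1 / 3) (fun _ => 1 / 3)))) ∧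
    (0 < η →
      payoff (shapleyA η) (fun _ => 1 / 3) (fun _ => 1 / 3) <
        ∑ c : Fin 3, (1 / 3 : ℝ) * shapleyA η 0 c) := by
  refine ⟨?_, ?_, ?_⟩
  · intro p
    fin_cases p <;>
      simp [deltaStar, Fin.sum_univ_three] <;> norm_num
  · intro hne ⟨h1, h2⟩
    rcases lt_or_gt_of_ne hne with hlt | hgt
    · have := h2 0
      simp [payoff, shapleyB, Fin.sum_univ_three, Matrix.vecHead, Matrix.vecTail] at this
      nlinarith
    · have := h1 0
      simp [payoff, shapleyA, Fin.sum_univ_three, Matrix.vecHead, Matrix.vecTail] at this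
      nlinarith
  · intro hpos
    simp [payoff, shapleyA, Fin.sum_univ_three, Matrix.vecHead, Matrix.vecTail]
    nlinarith
end
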